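/- Under the SETUP, for every w ∈ S^⊥: ‖P_{S^⊥}(x̃(w))‖ ≤ ‖x̃(w) − 𝐱*‖ ≤ √(2L (D(w) − D*)). In particular, D(w) − D* ≥ (1/(2L)) ‖x̃(w) − 𝐱*‖² for all w ∈ S^⊥. -/

import Mathlib

noncomputable section

open scoped BigOperators

abbrev Evec (d : ℕ) := EuclideanSpace ℝ (Fin d)
abbrev ENvec (n d : ℕ) := PiLp 2 (fun _ : Fin n => EuclideanSpace ℝ (Fin d))

/-- Real inner product on `ℝ^d`. -/
def ip {d : ℕ} (x y : Evec d) : ℝ := inner ℝ x y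

/-- Real inner product on `ℝ^{nd}`. -/
def ipN {n d : ℕ} (x y : ENvec n d) : ℝ := inner ℝ x y

/-- `g` is a subgradient of `f` at `x`. -/
def IsSubgradientAt {d : ℕ} (f : Evec d → ℝ) (g x : Evec d) : Prop :=
  ∀ y, f x + ip g (y - x) ≤ f y

/-- `f` is strongly convex on `X` with parameter `θ`. -/
def StrongConvexOnWith {d : ℕ} (X : Set (Evec d)) (θ : ℝ) (f : Evec d → ℝ) : Prop :=
  ∀ x ∈ X, ∀ y ∈ X, ∀ g, IsSubgradientAt f g x →
    θ / 2 * ‖y - x‖ ^ 2 ≤ f y - f x - ip g (y - x)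

structure Setup (n d : ℕ) : Type where
  hn : 2 ≤ n
  hd : 1 ≤ d
  X : Fin n → Set (Evec d)
  f : Fin n → Evec d → ℝ
  θ : Fin n → ℝ
  hθ : ∀ i, 0 < θ i
  hXne : ∀ i, (X i).Nonempty
  hXclosed : ∀ i, IsClosed (X i)
  hXconv : ∀ i, Convex ℝ (X i)
  hfconv : ∀ i, ConvexOn ℝ Set.univ (f i)
  hstrong : ∀ i, StrongConvexOnWith (X i) (θ i) (f i)
  hzero : (0 : Evec d) ∈ interior (⋂ i, X i)
  xt : Fin n → Evec d → Evec d
  hxt_mem : ∀ i w, xt i w ∈ X i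
  hxt_max : ∀ i w, ∀ x ∈ X i, ip w x - f i x ≤ ip w (xt i w) - f i (xt i w)
  hxt_uniq : ∀ i w x, x ∈ X i →
    ip w x - f i x = ip w (xt i w) - f i (xt i w) → x = xt i w
  xstar : Evec d
  hxstar_mem : xstar ∈ ⋂ i, X i
  hxstar_min : ∀ x ∈ ⋂ i, X i, (∑ i, f i xstar) ≤ ∑ i, f i x

namespace Setup

variable {n d : ℕ} (P : Setup n d)

/-- Lipschitz constants `L_i = 1/θ_i`. -/
def Lip (i : Fin n) : ℝ := 1 / P.θ i

/-- `L = max_i L_i`. -/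
def Lmax : ℝ := ⨆ i, P.Lip i

/-- The conjugate function `d_i`. -/
def dconj (i : Fin n) (w : Evec d) : ℝ := ip w (P.xt i w) - P.f i (P.xt i w)

/-- The Fenchel dual function `D`. -/
def D (w : ENvec n d) : ℝ := ∑ i, P.dconj i (w i)

/-- The map `x̃ = ∇D`. -/
def xtv (w : ENvec n d) : ENvec n d := WithLp.toLp 2 (fun i => P.xt i (w i))

/-- The primal objective `F`. -/
def Fobj (x : ENvec n d) : ℝ := ∑ i, P.f i (x i)

/-- The optimal primal value. -/
def Fstar : ℝ := ∑ i, P.f i P.xstar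

/-- The primal optimum `𝐱* = (x*, …, x*)`. -/
def xstarv : ENvec n d := WithLp.toLp 2 (fun _ => P.xstar)

end Setup

/-- The subspace `S^⊥ = {w : w_1 + ⋯ + w_n = 0}`. -/
def Sperp (n d : ℕ) : Submodule ℝ (ENvec n d) where
  carrier := {w | ∑ i, w i = 0}
  add_mem' := by
    intro a b ha hb
    simp only [Set.mem_setOf_eq] at ha hb ⊢
    calc ∑ i, (a + b) i = ∑ i, (a i + b i) := rfl
    _ = (∑ i, a i) + ∑ i, b i := Finset.sum_add_distrib
    _ = 0 := by rw [ha, hb, add_zero]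
  zero_mem' := by
    simp only [Set.mem_setOf_eq]
    calc ∑ i, (0 : ENvec n d) i = ∑ _i : Fin n, (0 : Evec d) := rfl
    _ = 0 := by simp
  smul_mem' := by
    intro c a ha
    simp only [Set.mem_setOf_eq] at ha ⊢
    calc ∑ i, (c • a) i = ∑ i, c • a i := rfl
    _ = c • ∑ i, a i := Finset.smul_sum.symm
    _ = 0 := by rw [ha, smul_zero]

/-- Orthogonal projection onto `S^⊥`. -/
def projSperp {n d : ℕ} (x : ENvec n d) : ENvec n d :=
  (Submodule.orthogonalProjection (Sperp n d) x : ENvec n d)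

namespace Setup

variable {n d : ℕ} (P : Setup n d)

/-- The optimal dual value `D* = min_{w ∈ S^⊥} D(w)`. -/
def Dstar : ℝ := sInf (P.D '' (Sperp n d : Set (ENvec n d)))

end Setup

/-- Block action of `H ⊗ I_d` on `ℝ^{nd}`. -/
def blockMul {n d : ℕ} (H : Matrix (Fin n) (Fin n) ℝ) (w : ENvec n d) : ENvec n d :=
  WithLp.toLp 2 (fun i => ∑ j, H i j • w j)

/-- A time-varying sequence of weighted undirected graphs. -/
structure GraphSeq (n : ℕ) : Type where
  adj : ℕ → Fin n → Fin n → Bool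
  adj_symm : ∀ k i j, adj k i j = adj k j i
  adj_irrefl : ∀ k i, adj k i i = false
  adj_ne : ∀ k, ∃ i j, adj k i j = true
  h : ℕ → Fin n → Fin n → ℝ
  h_symm : ∀ k i j, h k i j = h k j i
  hlow : ℝ
  hhigh : ℝ
  hlow_pos : 0 < hlow
  h_mem : ∀ k i j, adj k i j = true → h k i j ∈ Set.Icc hlow hhigh

namespace GraphSeq

variable {n : ℕ} (Gs : GraphSeq n)

/-- The weight matrix `H_{G^k}`. -/
def H (k : ℕ) : Matrix (Fin n) (Fin n) ℝ :=
  Matrix.of fun i j =>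
    if i = j then ∑ l, (if Gs.adj k i l = true then Gs.h k i l else 0)
    else if Gs.adj k i j = true then -(Gs.h k i j) else 0

end GraphSeq

/-- The Fenchel dual gradient algorithm: step sizes, iterates, and their defining relations. -/
structure Algo (n d : ℕ) (P : Setup n d) (Gs : GraphSeq n) : Type where
  δ : ℝ
  hδ_pos : 0 < δ
  hδ : ∀ k, (δ • Matrix.diagonal (fun i => (P.Lip i)⁻¹) - Gs.H k).PosSemidef
  αlo : ℝ
  αhi : ℝ
  hαlo : 0 < αlo
  hαhi : αhi < 2 / δ
  α : ℕ → ℝ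
  hα : ∀ k, α k ∈ Set.Icc αlo αhi
  w : ℕ → ENvec n d
  hw0 : w 0 ∈ Sperp n d
  hrec : ∀ k, w (k + 1) = w k - α k • blockMul (Gs.H k) (P.xtv (w k))

namespace Algo

variable {n d : ℕ} {P : Setup n d} {Gs : GraphSeq n} (A : Algo n d P Gs)

/-- Primal iterates `x^k = ∇D(w^k)`. -/
def x (k : ℕ) : ENvec n d := P.xtv (A.w k)

/-- The constant `ρ = min{α̲ − α̲²δ/2, ᾱ − ᾱ²δ/2}`. -/
def ρ : ℝ := min (A.αlo - A.αlo ^ 2 * A.δ / 2) (A.αhi - A.αhi ^ 2 * A.δ / 2)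

end Algo

/-!
Strong convexity of `f_i` makes `d_i(w_i) - (⟪w_i, x*⟫ - f_i(x*))` at least
`θ_i / 2 * ‖x̃_i(w_i) - x*‖ ^ 2`, since `x̃_i(w_i)` maximizes the strongly concave function
`x ↦ ⟪w_i, x⟫ - f_i(x)` on `X_i`. Summing over `i`, the terms `⟪w_i, x*⟫` cancel for `w ∈ S^⊥`,
which leaves `D(w) + F* ≥ ‖x̃(w) - 𝐱*‖ ^ 2 / (2L)`. Strong duality `D* = -F*` comes from a
supporting hyperplane at `(0, F*)` to the epigraph of the perturbation function
`u ↦ inf {F(x) | x_i ∈ X_i, x - u ∈ S}`, which contains a neighbourhood of `(0, F(0) + 1)` because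
`0 ∈ int ⋂ X_i`; the slope of that hyperplane is a dual optimum. Finally `𝐱* ∈ S = (S^⊥)^⊥`, so
`P_{S^⊥} x̃(w) = P_{S^⊥} (x̃(w) - 𝐱*)`.
-/

open Filter Topology

lemma le_of_forall_mem_Ioo_le_add_mul {a b K : ℝ} (h : ∀ t ∈ Set.Ioo (0 : ℝ) 1, a ≤ b + t * K) :
    a ≤ b := by
  have hlim : Tendsto (fun t : ℝ => b + t * K) (𝓝[>] 0) (𝓝 b) :=
    ((continuous_const.add (continuous_id.mul continuous_const)).tendsto' 0 b
      (by simp)).mono_left nhdsWithin_le_nhds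
  exact ge_of_tendsto hlim (by filter_upwards [Ioo_mem_nhdsGT one_pos] with t ht using h t ht)

lemma eq_zero_of_forall_mul_le {a B : ℝ} (h : ∀ c : ℝ, c * a ≤ B) : a = 0 := by
  by_contra ha
  have := h ((B + 1) / a)
  rw [div_mul_cancel₀ _ ha] at this
  linarith

theorem Convex.exists_clm_add_le {E : Type*} [NormedAddCommGroup E] [NormedSpace ℝ E]
    {C : Set (E × ℝ)} (hC : Convex ℝ C) {x₀ : E} {t₀ s : ℝ} (hs : t₀ < s)
    (hs_mem : (x₀, s) ∈ interior C) (ht₀ : (x₀, t₀) ∉ interior C) :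
    ∃ φ : StrongDual ℝ E, ∀ p ∈ C, t₀ + φ (p.1 - x₀) ≤ p.2 := by
  obtain ⟨ψ, hψ⟩ := geometric_hahn_banach_open_point hC.interior isOpen_interior ht₀
  have hψC : ∀ p ∈ C, ψ p ≤ ψ (x₀, t₀) := by
    have hCsub : C ⊆ closure (interior C) := by
      rw [hC.closure_interior_eq_closure_of_nonempty_interior ⟨_, hs_mem⟩]
      exact subset_closure
    exact fun p hp => closure_minimal (fun q hq => (hψ q hq).le)
      (isClosed_Iic.preimage ψ.continuous) (hCsub hp)
  set β := ψ (0, 1)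
  have hψ_apply : ∀ p : E × ℝ, ψ p = ψ (p.1, 0) + p.2 * β := fun p => by
    rw [← smul_eq_mul, ← map_smul, ← map_add]
    simp
  -- the hyperplane is not vertical: it separates `(x₀, s)` from `(x₀, t₀)`
  have hβ : β < 0 := by
    have := hψ _ hs_mem
    rw [hψ_apply (x₀, s), hψ_apply (x₀, t₀)] at this
    nlinarith
  refine ⟨(-β)⁻¹ • ψ.comp (ContinuousLinearMap.inl ℝ E ℝ), fun p hp => ?_⟩
  have hp := hψC p hp
  rw [hψ_apply p, hψ_apply (x₀, t₀)] at hp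
  have hsub : ψ (p.1 - x₀, 0) = ψ (p.1, 0) - ψ (x₀, 0) := by
    rw [← map_sub, Prod.mk_sub_mk, sub_zero]
  simp only [smul_apply, ContinuousLinearMap.comp_apply,
    ContinuousLinearMap.inl_apply, smul_eq_mul, hsub]
  rw [← le_sub_iff_add_le', inv_mul_le_iff₀ (neg_pos.mpr hβ)]
  nlinarith

theorem ConvexOn.exists_clm_add_le {E : Type*} [NormedAddCommGroup E] [NormedSpace ℝ E]
    {f : E → ℝ} (hf : ConvexOn ℝ Set.univ f) (hfc : Continuous f) (x : E) :
    ∃ φ : StrongDual ℝ E, ∀ y, f x + φ (y - x) ≤ f y := by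
  have hopen : IsOpen {p : E × ℝ | p.1 ∈ Set.univ ∧ f p.1 < p.2} := by
    simpa using isOpen_lt (hfc.comp continuous_fst) continuous_snd
  obtain ⟨φ, hφ⟩ := hf.convex_strict_epigraph.exists_clm_add_le (x₀ := x) (lt_add_one (f x))
    (by rw [hopen.interior_eq]; simp) (by rw [hopen.interior_eq]; simp)
  refine ⟨φ, fun y => le_of_forall_pos_le_add fun ε hε => ?_⟩
  simpa using hφ (y, f y + ε) (by simpa using hε)

lemma exists_isSubgradientAt {d : ℕ} {f : Evec d → ℝ} (hf : ConvexOn ℝ Set.univ f) (x : Evec d) :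
    ∃ g, IsSubgradientAt f g x := by
  obtain ⟨φ, hφ⟩ := hf.exists_clm_add_le hf.locallyLipschitz.continuous x
  refine ⟨(InnerProductSpace.toDual ℝ (Evec d)).symm φ, fun y => ?_⟩
  simpa [ip] using hφ y

namespace StrongConvexOnWith

variable {d : ℕ} {X : Set (Evec d)} {θ : ℝ} {f : Evec d → ℝ}

lemma add_le_segment (hX : Convex ℝ X) (hf : ConvexOn ℝ Set.univ f)
    (hθ : StrongConvexOnWith X θ f) {x y : Evec d} (hx : x ∈ X) (hy : y ∈ X) {t : ℝ}
    (ht₀ : 0 ≤ t) (ht₁ : t ≤ 1) :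
    f ((1 - t) • x + t • y) + θ / 2 * (t * (1 - t)) * ‖x - y‖ ^ 2 ≤ (1 - t) * f x + t * f y := by
  set z := (1 - t) • x + t • y
  have hz : z ∈ X := hX hx hy (by linarith) ht₀ (by ring)
  obtain ⟨g, hg⟩ := exists_isSubgradientAt hf z
  have hxz : x - z = t • (x - y) := by module
  have hyz : y - z = (t - 1) • (x - y) := by module
  have hx' := hθ z hz x hx g hg
  have hy' := hθ z hz y hy g hg
  rw [hxz, norm_smul, mul_pow, Real.norm_eq_abs, sq_abs, ip, inner_smul_right] at hx'
  rw [hyz, norm_smul, mul_pow, Real.norm_eq_abs, sq_abs, ip, inner_smul_right] at hy'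
  nlinarith [mul_le_mul_of_nonneg_left hx' (sub_nonneg.mpr ht₁), mul_le_mul_of_nonneg_left hy' ht₀]

lemma sq_norm_sub_le_of_isMaxOn (hX : Convex ℝ X) (hf : ConvexOn ℝ Set.univ f)
    (hθ : StrongConvexOnWith X θ f) {w x₁ x₂ : Evec d} (hx₁ : x₁ ∈ X) (hx₂ : x₂ ∈ X)
    (hmax : IsMaxOn (fun x => ip w x - f x) X x₁) :
    θ / 2 * ‖x₁ - x₂‖ ^ 2 ≤ (ip w x₁ - f x₁) - (ip w x₂ - f x₂) := by
  refine le_of_forall_mem_Ioo_le_add_mul (K := θ / 2 * ‖x₁ - x₂‖ ^ 2) fun t ⟨ht₀, ht₁⟩ => ?_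
  have hseg := hθ.add_le_segment hX hf hx₁ hx₂ ht₀.le ht₁.le
  have hle := isMaxOn_iff.mp hmax _ (hX hx₁ hx₂ (sub_nonneg.2 ht₁.le) ht₀.le (by ring))
  simp only [ip, inner_add_right, inner_smul_right] at hle ⊢
  have key : t * (θ / 2 * (1 - t) * ‖x₁ - x₂‖ ^ 2) ≤
      t * ((inner ℝ w x₁ - f x₁) - (inner ℝ w x₂ - f x₂)) := by nlinarith
  nlinarith [le_of_mul_le_mul_left key ht₀]

end StrongConvexOnWith

lemma inner_toLp_const {n d : ℕ} (w : ENvec n d) (y : Evec d) :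
    inner ℝ w (WithLp.toLp 2 (fun _ : Fin n => y)) = inner ℝ (∑ i, w i) y := by
  rw [PiLp.inner_apply, sum_inner]

lemma norm_projSperp_le_norm_sub_toLp_const {n d : ℕ} (x : ENvec n d) (y : Evec d) :
    ‖projSperp x‖ ≤ ‖x - WithLp.toLp 2 (fun _ : Fin n => y)‖ := by
  have hy : WithLp.toLp 2 (fun _ : Fin n => y) ∈ (Sperp n d)ᗮ := by
    refine (Submodule.mem_orthogonal _ _).2 fun w hw => ?_
    rw [inner_toLp_const, show ∑ i, w i = 0 from hw, inner_zero_left]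
  calc ‖projSperp x‖ = ‖(Sperp n d).starProjection (x - WithLp.toLp 2 (fun _ : Fin n => y))‖ := by
        rw [map_sub, ((Sperp n d).starProjection_apply_eq_zero_iff).2 hy, sub_zero]; rfl
    _ ≤ _ := Submodule.norm_starProjection_apply_le _ _

/-- The subspace `S` of the paper; `Sperp n d` is its orthogonal complement. -/
def consensus (n d : ℕ) : Submodule ℝ (ENvec n d) where
  carrier := {x | ∀ i j, x i = x j}
  add_mem' {x y} hx hy i j := by simp [hx i j, hy i j]
  zero_mem' i j := rfl
  smul_mem' c x hx i j := by simp [hx i j]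

namespace Setup

variable {n d : ℕ} (P : Setup n d)

lemma Lmax_pos : 0 < P.Lmax := by
  have hbdd : BddAbove (Set.range P.Lip) := (Set.finite_range _).bddAbove
  obtain ⟨i₀⟩ : Nonempty (Fin n) := ⟨⟨0, by have := P.hn; omega⟩⟩
  exact (one_div_pos.2 (P.hθ i₀)).trans_le (le_ciSup hbdd i₀)

lemma one_div_two_mul_Lmax_le (i : Fin n) : 1 / (2 * P.Lmax) ≤ P.θ i / 2 := by
  have hLip : 1 / P.θ i ≤ P.Lmax := le_ciSup (Set.finite_range P.Lip).bddAbove i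
  have := P.hθ i
  rw [div_le_iff₀ this] at hLip
  rw [div_le_div_iff₀ (by linarith [P.Lmax_pos]) two_pos]
  nlinarith

lemma D_add_Fstar {w : ENvec n d} (hw : w ∈ Sperp n d) :
    P.D w + P.Fstar = ∑ i, (P.dconj i (w i) - (ip (w i) P.xstar - P.f i P.xstar)) := by
  have hsum : ∑ i, ip (w i) P.xstar = 0 := by
    simp only [ip]
    rw [← sum_inner, show ∑ i, w i = 0 from hw, inner_zero_left]
  rw [Finset.sum_sub_distrib, Finset.sum_sub_distrib, hsum, zero_sub, sub_neg_eq_add]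
  rfl

lemma sq_norm_xt_sub_xstar_le (i : Fin n) (w : Evec d) :
    P.θ i / 2 * ‖P.xt i w - P.xstar‖ ^ 2 ≤ P.dconj i w - (ip w P.xstar - P.f i P.xstar) :=
  (P.hstrong i).sq_norm_sub_le_of_isMaxOn (P.hXconv i) (P.hfconv i) (P.hxt_mem i w)
    (Set.mem_iInter.1 P.hxstar_mem i) (isMaxOn_iff.2 (P.hxt_max i w))

lemma neg_Fstar_le_D {w : ENvec n d} (hw : w ∈ Sperp n d) : -P.Fstar ≤ P.D w := by
  have := Finset.sum_nonneg fun i (_ : i ∈ Finset.univ) =>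
    (mul_nonneg (by linarith [P.hθ i]) (sq_nonneg _)).trans (P.sq_norm_xt_sub_xstar_le i (w i))
  linarith [P.D_add_Fstar hw]

lemma sq_norm_xtv_sub_xstarv_le {w : ENvec n d} (hw : w ∈ Sperp n d) :
    1 / (2 * P.Lmax) * ‖P.xtv w - P.xstarv‖ ^ 2 ≤ P.D w + P.Fstar := by
  rw [PiLp.norm_sq_eq_of_L2, Finset.mul_sum, P.D_add_Fstar hw]
  exact Finset.sum_le_sum fun i _ =>
    (mul_le_mul_of_nonneg_right (P.one_div_two_mul_Lmax_le i) (sq_nonneg _)).trans (P.sq_norm_xt_sub_xstar_le i (w i))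

lemma convexOn_Fobj : ConvexOn ℝ Set.univ P.Fobj := by
  refine ⟨convex_univ, fun x _ y _ a b ha hb hab => ?_⟩
  calc P.Fobj (a • x + b • y) = ∑ i, P.f i (a • x i + b • y i) := rfl
    _ ≤ ∑ i, (a * P.f i (x i) + b * P.f i (y i)) :=
      Finset.sum_le_sum fun i _ => (P.hfconv i).2 trivial trivial ha hb hab
    _ = a • P.Fobj x + b • P.Fobj y := by
      simp only [Finset.sum_add_distrib, ← Finset.mul_sum, smul_eq_mul, Fobj]

lemma continuous_Fobj : Continuous P.Fobj :=
  continuous_finsetSum _ fun i _ =>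
    (P.hfconv i).locallyLipschitz.continuous.comp (PiLp.continuous_apply 2 _ i)

/-- Strict epigraph of the perturbation function `u ↦ inf {F x | x_i ∈ X_i, x - u ∈ S}`, whose
value at `0` is `F*`. -/
def perturbEpigraph : Set (ENvec n d × ℝ) :=
  {p | ∃ x : ENvec n d, (∀ i, x i ∈ P.X i) ∧ x - p.1 ∈ consensus n d ∧ P.Fobj x < p.2}

lemma convex_perturbEpigraph : Convex ℝ P.perturbEpigraph := by
  rintro p ⟨x, hxX, hxS, hxF⟩ q ⟨y, hyX, hyS, hyF⟩ a b ha hb hab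
  refine ⟨a • x + b • y, fun i => P.hXconv i (hxX i) (hyX i) ha hb hab, ?_, ?_⟩
  · have hcomb : a • x + b • y - (a • p + b • q).1 = a • (x - p.1) + b • (y - q.1) := by
      rw [Prod.fst_add, Prod.smul_fst, Prod.smul_fst]
      module
    rw [hcomb]
    exact add_mem (Submodule.smul_mem _ a hxS) (Submodule.smul_mem _ b hyS)
  · have hepi := P.convexOn_Fobj.convex_strict_epigraph (show (x, p.2) ∈ _ from ⟨trivial, hxF⟩)
      (show (y, q.2) ∈ _ from ⟨trivial, hyF⟩) ha hb hab
    exact hepi.2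

lemma mem_interior_perturbEpigraph : (0, P.Fobj 0 + 1) ∈ interior P.perturbEpigraph := by
  rw [mem_interior_iff_mem_nhds]
  have hX : ∀ᶠ p : ENvec n d × ℝ in 𝓝 (0, P.Fobj 0 + 1), ∀ i, p.1 i ∈ ⋂ j, P.X j :=
    eventually_all.2 fun i => ((PiLp.continuous_apply 2 _ i).comp continuous_fst).continuousAt
      |>.preimage_mem_nhds (by simpa using mem_interior_iff_mem_nhds.1 P.hzero)
  have hF : ∀ᶠ p : ENvec n d × ℝ in 𝓝 (0, P.Fobj 0 + 1), P.Fobj p.1 < p.2 :=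
    (P.continuous_Fobj.comp continuous_fst).continuousAt.eventually_lt
      continuous_snd.continuousAt (lt_add_one _)
  filter_upwards [hX, hF] with p hpX hpF
  exact ⟨p.1, fun i => Set.mem_iInter.1 (hpX i) i, by simp, hpF⟩

lemma notMem_perturbEpigraph : (0, P.Fstar) ∉ P.perturbEpigraph := by
  rintro ⟨x, hxX, hxS, hxF⟩
  obtain ⟨i₀⟩ : Nonempty (Fin n) := ⟨⟨0, by have := P.hn; omega⟩⟩
  have hx : ∀ i, x i = x i₀ := fun i => by simpa using hxS i i₀
  have hmin := P.hxstar_min (x i₀) (Set.mem_iInter.2 fun i => hx i ▸ hxX i)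
  exact hxF.not_ge (by simpa [Fobj, Fstar, hx] using hmin)

lemma D_eq_inner_sub_Fobj (w : ENvec n d) :
    P.D w = inner ℝ w (P.xtv w) - P.Fobj (P.xtv w) := by
  rw [PiLp.inner_apply, Fobj, ← Finset.sum_sub_distrib]
  rfl

lemma exists_mem_Sperp_D_le_neg_Fstar : ∃ w ∈ Sperp n d, P.D w ≤ -P.Fstar := by
  have hFstar : P.Fstar < P.Fobj 0 + 1 :=
    (P.hxstar_min 0 (interior_subset P.hzero)).trans_lt (lt_add_one _)
  obtain ⟨φ, hφ⟩ := P.convex_perturbEpigraph.exists_clm_add_le hFstar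
    P.mem_interior_perturbEpigraph (fun h => P.notMem_perturbEpigraph (interior_subset h))
  -- the epigraph is invariant under translations by `S`, so `φ` is bounded above on `S`
  have hφS : ∀ u ∈ consensus n d, φ u = 0 := fun u hu =>
      eq_zero_of_forall_mul_le (B := P.Fobj 0 + 1 - P.Fstar) fun c => by
    have hmem : (c • u, P.Fobj 0 + 1) ∈ P.perturbEpigraph :=
      ⟨0, fun i => by simpa using Set.mem_iInter.1 (interior_subset P.hzero) i,
        by rw [zero_sub, ← neg_smul]; exact (consensus n d).smul_mem (-c) hu, lt_add_one _⟩
    have := hφ _ hmem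
    rw [sub_zero, map_smul, smul_eq_mul] at this
    exact le_sub_iff_add_le'.2 this
  set w := (InnerProductSpace.toDual ℝ (ENvec n d)).symm φ
  have hw : ∀ x, inner ℝ w x = φ x := fun x => InnerProductSpace.toDual_symm_apply
  refine ⟨w, ?_, ?_⟩
  · have := hφS (WithLp.toLp 2 (fun _ => ∑ i, w i)) fun i j => rfl
    rwa [← hw, inner_toLp_const, inner_self_eq_zero] at this
  · rw [P.D_eq_inner_sub_Fobj, hw]
    refine sub_le_iff_le_add.2 (le_of_forall_pos_le_add fun ε hε => ?_)
    have hmem : (P.xtv w, P.Fobj (P.xtv w) + ε) ∈ P.perturbEpigraph :=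
      ⟨P.xtv w, fun i => P.hxt_mem i (w i), by simp, by linarith⟩
    have := hφ _ hmem
    rw [sub_zero] at this
    linarith

lemma Dstar_eq_neg_Fstar : P.Dstar = -P.Fstar := by
  obtain ⟨w, hw, hDw⟩ := P.exists_mem_Sperp_D_le_neg_Fstar
  have hlb : ∀ r ∈ P.D '' (Sperp n d : Set (ENvec n d)), -P.Fstar ≤ r := by
    rintro _ ⟨v, hv, rfl⟩
    exact P.neg_Fstar_le_D hv
  exact le_antisymm ((csInf_le ⟨_, hlb⟩ ⟨w, hw, rfl⟩).trans hDw) (le_csInf ⟨_, w, hw, rfl⟩ hlb)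

end Setup

theorem stmt15 {n d : ℕ} (P : Setup n d) :
    ∀ w ∈ Sperp n d,
      ‖projSperp (P.xtv w)‖ ≤ ‖P.xtv w - P.xstarv‖ ∧
      ‖P.xtv w - P.xstarv‖ ≤ Real.sqrt (2 * P.Lmax * (P.D w - P.Dstar)) ∧
      1 / (2 * P.Lmax) * ‖P.xtv w - P.xstarv‖ ^ 2 ≤ P.D w - P.Dstar := by
  intro w hw
  have hlower : 1 / (2 * P.Lmax) * ‖P.xtv w - P.xstarv‖ ^ 2 ≤ P.D w - P.Dstar := by
    rw [P.Dstar_eq_neg_Fstar, sub_neg_eq_add]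
    exact P.sq_norm_xtv_sub_xstarv_le hw
  have hsq : ‖P.xtv w - P.xstarv‖ ^ 2 ≤ 2 * P.Lmax * (P.D w - P.Dstar) := by
    rwa [one_div_mul_eq_div, div_le_iff₀' (by linarith [P.Lmax_pos])] at hlower
  exact ⟨norm_projSperp_le_norm_sub_toLp_const _ _, Real.le_sqrt_of_sq_le hsq, hlower⟩
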